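/- For every k ≥ 1 the function ∂_k is monotone: for all integers 0 ≤ r ≤ s, one has ∂_k(r) ≤ ∂_k(s). -/

import Mathlib

open Finset

/-- `IsCascadeRep k r t c` says that `r = ∑_{i=t}^{k} C(c i, i)` is the `k`-th binomial
(cascade/Macaulay) representation of `r`, i.e. `c k > c (k-1) > ⋯ > c t ≥ t ≥ 1`. -/
def IsCascadeRep (k r t : ℕ) (c : ℕ → ℕ) : Prop :=
  1 ≤ t ∧ t ≤ k ∧ (∀ i, t ≤ i → i < k → c i < c (i + 1)) ∧ t ≤ c t ∧
    r = ∑ i ∈ Finset.Icc t k, (c i).choose i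

/-- The value `∑_{i=t}^{k} g (c i) i` computed from the (unique) `k`-th cascade
representation of `r`; by convention `0` if no representation exists (e.g. `r = 0`). -/
noncomputable def cascadeVal (g : ℕ → ℕ → ℕ) (k r : ℕ) : ℕ :=
  sInf {s | ∃ t c, IsCascadeRep k r t c ∧ s = ∑ i ∈ Finset.Icc t k, g (c i) i}

/-- `∂_k(r) = C(r_k, k-1) + ⋯ + C(r_t, t-1)`, with `∂_k(0) = 0`. -/
noncomputable def partialShadow (k r : ℕ) : ℕ :=
  cascadeVal (fun m i => m.choose (i - 1)) k r

/-- `∂̃_k(r) = C(r_k - 1, k-1) + ⋯ + C(r_t - 1, t-1)`, with `∂̃_k(0) = 0`. -/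
noncomputable def partialShadowTilde (k r : ℕ) : ℕ :=
  cascadeVal (fun m i => (m - 1).choose (i - 1)) k r

/-- `r^⟨k⟩ = C(r_k + 1, k+1) + ⋯ + C(r_t + 1, t+1)`, with `0^⟨k⟩ = 0`. -/
noncomputable def upperShadow (k r : ℕ) : ℕ :=
  cascadeVal (fun m i => (m + 1).choose (i + 1)) k r

/-- A simplicial complex on the ground set `[n] = {1,…,n}`:
a collection of subsets of `[n]` closed under taking subsets. -/
def SimplicialOn (n : ℕ) (Δ : Set (Finset ℕ)) : Prop :=
  (∀ σ ∈ Δ, σ ⊆ Finset.Icc 1 n) ∧ ∀ σ ∈ Δ, ∀ τ, τ ⊆ σ → τ ∈ Δ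

/-- The number of faces of `Δ` of cardinality `c` (so `faceCount Δ (k+1) = f_k(Δ)`). -/
noncomputable def faceCount (Δ : Set (Finset ℕ)) (c : ℕ) : ℕ :=
  Set.ncard {σ ∈ Δ | σ.card = c}

/-- The number of faces of the relative complex `Δ \ Γ` of cardinality `c`. -/
noncomputable def relFaceCount (Δ Γ : Set (Finset ℕ)) (c : ℕ) : ℕ :=
  Set.ncard {σ | σ ∈ Δ ∧ σ ∉ Γ ∧ σ.card = c}

/-- `Δ` is compressed on ground set `[n]`: for each cardinality, its faces of that
cardinality form an initial segment of the reverse lexicographic (colex) order. -/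
def IsCompressed (n : ℕ) (Δ : Set (Finset ℕ)) : Prop :=
  ∀ σ τ : Finset ℕ, σ ⊆ Finset.Icc 1 n → τ ∈ Δ → σ.card = τ.card →
    toColex σ ≤ toColex τ → σ ∈ Δ

/-- A multicomplex on `[n]`: a collection of finite multisets with elements in `[n]`,
closed under taking multisubsets. -/
def MulticomplexOn (n : ℕ) (Δ : Set (Multiset ℕ)) : Prop :=
  (∀ F ∈ Δ, ∀ x ∈ F, x ∈ Finset.Icc 1 n) ∧ ∀ F ∈ Δ, ∀ G, G ≤ F → G ∈ Δ

/-- The number of multisets in `Δ` of cardinality `c`. -/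
noncomputable def mFaceCount (Δ : Set (Multiset ℕ)) (c : ℕ) : ℕ :=
  Set.ncard {F ∈ Δ | Multiset.card F = c}

/-- Strict reverse lexicographic comparison of multisets (intended for multisets of
equal cardinality): writing each as a weakly increasing sequence, `F < G` iff at the
largest position where they differ, `F` has the smaller entry. -/
def MRevLexLT (F G : Multiset ℕ) : Prop :=
  List.Lex (· < ·) (Multiset.sort F (· ≤ ·)).reverse (Multiset.sort G (· ≤ ·)).reverse

/-- A compressed multicomplex on `[n]`: each cardinality layer is an initial segment of
the reverse lexicographic order on multisets of that cardinality with entries in `[n]`. -/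
def IsCompressedMulti (n : ℕ) (Δ : Set (Multiset ℕ)) : Prop :=
  ∀ F G : Multiset ℕ, (∀ x ∈ F, x ∈ Finset.Icc 1 n) → G ∈ Δ →
    Multiset.card F = Multiset.card G → (F = G ∨ MRevLexLT F G) → F ∈ Δ

/-- `Ψ_{j+1} \ Ψ_j` for the relative complex `Δ \ Γ` and the list `L` of facets:
the faces of `Δ \ Γ` contained in the `j`-th facet but in no earlier one. -/
def shellStep (Δ Γ : Set (Finset ℕ)) (L : List (Finset ℕ)) (j : ℕ) : Set (Finset ℕ) :=
  {τ | τ ∈ Δ ∧ τ ∉ Γ ∧ τ ⊆ L.getD j ∅ ∧ ∀ i < j, ¬ τ ⊆ L.getD i ∅}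

/-- `L` is a shelling order of the relative simplicial complex `Δ \ Γ`:
it enumerates the inclusion-maximal faces of `Δ \ Γ` without repetition, and at every
step the newly added faces have a unique inclusion-minimal element (equivalently, a
minimum, as the family is finite). -/
def IsShelling (Δ Γ : Set (Finset ℕ)) (L : List (Finset ℕ)) : Prop :=
  L.Nodup ∧
  (∀ σ : Finset ℕ,
    (σ ∈ Δ ∧ σ ∉ Γ ∧ ∀ τ, τ ∈ Δ → τ ∉ Γ → σ ⊆ τ → σ = τ) ↔ σ ∈ L) ∧
  ∀ j < L.length, ∃ R, R ∈ shellStep Δ Γ L j ∧ ∀ τ ∈ shellStep Δ Γ L j, R ⊆ τ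

/-- The map `Φ_d` sending a multiset `F = {b_1 ≤ … ≤ b_k}` (with `k ≤ d`) to the
`d`-set `{1,…,d−k} ∪ {b_1 + d−k+1, …, b_k + d}`. -/
def PhiBFS (d : ℕ) (F : Multiset ℕ) : Finset ℕ :=
  Finset.Icc 1 (d - Multiset.card F) ∪
    (Finset.univ : Finset (Fin (Multiset.card F))).image
      (fun i : Fin (Multiset.card F) =>
        (Multiset.sort F (· ≤ ·)).getD (i : ℕ) 0 + (d - Multiset.card F) + 1 + (i : ℕ))

/-!
`cascadeVal` is an infimum over all cascade representations, so uniqueness of the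
representation is never needed: `∂_k(r)` is at most the value read off any representation
of `r`, and `∂_k(s)` is attained by some representation of `s`. It then suffices to compare
two representations of `r ≤ s` by their top coefficients `r_k` and `s_k`. If `r_k < s_k`,
the standard cascade bound gives `∂_k(r) ≤ C(r_k + 1, k - 1) ≤ C(s_k, k - 1) ≤ ∂_k(s)`.
If `r_k > s_k`, then `s < C(s_k + 1, k) ≤ C(r_k, k) ≤ r`, which is impossible. If
`r_k = s_k`, remove the common top term and induct on `k`.
-/

namespace IsCascadeRep

variable {k r t : ℕ} {c : ℕ → ℕ}

lemma one_le (h : IsCascadeRep k r t c) : 1 ≤ k := h.1.trans h.2.1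

lemma le_apply (h : IsCascadeRep k r t c) {i : ℕ} (hti : t ≤ i) (hik : i ≤ k) : i ≤ c i := by
  obtain ⟨-, -, hinc, hct, -⟩ := h
  induction i, hti using Nat.le_induction with
  | base => exact hct
  | succ i hti ih =>
    have := hinc i hti (by omega)
    have := ih (by omega)
    omega

lemma choose_le (h : IsCascadeRep k r t c) {i : ℕ} (hti : t ≤ i) (hik : i ≤ k) :
    (c i).choose i ≤ r := by
  rw [h.2.2.2.2]
  exact single_le_sum (f := fun i => (c i).choose i) (fun _ _ => Nat.zero_le _)
    (mem_Icc.2 ⟨hti, hik⟩)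

lemma pos (h : IsCascadeRep k r t c) : 0 < r :=
  (Nat.choose_pos (h.le_apply le_rfl h.2.1)).trans_le (h.choose_le le_rfl h.2.1)

lemma eq_choose_of_eq (h : IsCascadeRep k r k c) : r = (c k).choose k := by
  rw [h.2.2.2.2, Icc_self, sum_singleton]

lemma exists_of_succ (h : IsCascadeRep (k + 1) r t c) (htk : t ≤ k) :
    ∃ r', IsCascadeRep k r' t c ∧ r = r' + (c (k + 1)).choose (k + 1) :=
  ⟨_, ⟨h.1, htk, fun i hti hik => h.2.2.1 i hti (by omega), h.2.2.2.1, rfl⟩,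
    by rw [h.2.2.2.2, sum_Icc_succ_top (by omega)]⟩

lemma update_succ (h : IsCascadeRep k r t c) {a : ℕ} (ha : c k < a) :
    IsCascadeRep (k + 1) (r + a.choose (k + 1)) t (Function.update c (k + 1) a) := by
  obtain ⟨ht1, htk, hinc, hct, hr⟩ := h
  refine ⟨ht1, by omega, fun i hti hik => ?_, ?_, ?_⟩
  · rw [Function.update_of_ne (by omega)]
    rcases (Nat.lt_succ_iff.1 hik).eq_or_lt with rfl | hik
    · rwa [Function.update_self]
    · rw [Function.update_of_ne (by omega)]
      exact hinc i hti hik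
  · rwa [Function.update_of_ne (by omega)]
  · rw [sum_Icc_succ_top (by omega), Function.update_self, hr]
    congr 1
    refine sum_congr rfl fun i hi => ?_
    rw [Function.update_of_ne (by have := (mem_Icc.1 hi).2; omega)]

lemma lt_choose_succ (h : IsCascadeRep k r t c) : r < (c k + 1).choose k := by
  induction k generalizing r with
  | zero => exact absurd h.one_le (by omega)
  | succ m ih =>
    have hm := h.le_apply h.2.1 le_rfl
    rw [Nat.choose_succ_succ']
    rcases h.2.1.eq_or_lt with rfl | htm
    · rw [h.eq_choose_of_eq]
      have := Nat.choose_pos (by omega : m ≤ c (m + 1))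
      omega
    · obtain ⟨r', h', rfl⟩ := h.exists_of_succ (by omega)
      have := ih h'
      have : (c m + 1).choose m ≤ (c (m + 1)).choose m :=
        Nat.choose_le_choose m (h.2.2.1 m (by omega) (by omega))
      omega

lemma sum_choose_pred_le (h : IsCascadeRep k r t c) :
    ∑ i ∈ Icc t k, (c i).choose (i - 1) ≤ (c k + 1).choose (k - 1) := by
  induction k generalizing r with
  | zero => exact absurd h.one_le (by omega)
  | succ m ih =>
    rcases h.2.1.eq_or_lt with rfl | htm
    · rw [Icc_self, sum_singleton]
      exact Nat.choose_le_succ _ _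
    · obtain ⟨r', h', -⟩ := h.exists_of_succ (by omega)
      obtain ⟨j, rfl⟩ : ∃ j, m = j + 1 := ⟨m - 1, by have := h'.one_le; omega⟩
      have := ih h'
      have : (c (j + 1) + 1).choose j ≤ (c (j + 1 + 1)).choose j :=
        Nat.choose_le_choose j (h.2.2.1 (j + 1) (by omega) (by omega))
      rw [sum_Icc_succ_top h.2.1, Nat.add_sub_cancel, Nat.choose_succ_succ']
      simp only [Nat.add_sub_cancel] at *
      omega

lemma sum_choose_pred_le_of_le {s u : ℕ} {d : ℕ → ℕ} (hc : IsCascadeRep k r t c)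
    (hd : IsCascadeRep k s u d) (hrs : r ≤ s) :
    ∑ i ∈ Icc t k, (c i).choose (i - 1) ≤ ∑ i ∈ Icc u k, (d i).choose (i - 1) := by
  induction k generalizing r s with
  | zero => exact absurd hc.one_le (by omega)
  | succ m ih =>
    have hd_top : (d (m + 1)).choose m ≤ ∑ i ∈ Icc u (m + 1), (d i).choose (i - 1) :=
      single_le_sum (f := fun i => (d i).choose (i - 1)) (fun _ _ => Nat.zero_le _)
        (mem_Icc.2 ⟨hd.2.1, le_rfl⟩)
    rcases lt_trichotomy (c (m + 1)) (d (m + 1)) with hlt | heq | hgt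
    · calc ∑ i ∈ Icc t (m + 1), (c i).choose (i - 1)
          ≤ (c (m + 1) + 1).choose m := hc.sum_choose_pred_le
        _ ≤ (d (m + 1)).choose m := Nat.choose_le_choose m hlt
        _ ≤ _ := hd_top
    · rcases hc.2.1.eq_or_lt with rfl | htm
      · rwa [Icc_self, sum_singleton, Nat.add_sub_cancel, heq]
      obtain ⟨r', hc', rfl⟩ := hc.exists_of_succ (by omega)
      have hum : u ≤ m := by
        by_contra hum
        obtain rfl : u = m + 1 := by have := hd.2.1; omega
        have := hd.eq_choose_of_eq
        have := hc'.pos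
        rw [heq] at hrs
        omega
      obtain ⟨s', hd', rfl⟩ := hd.exists_of_succ hum
      have := ih hc' hd' (by rw [heq] at hrs; omega)
      rw [sum_Icc_succ_top hc.2.1, sum_Icc_succ_top hd.2.1, heq]
      omega
    · have := hd.lt_choose_succ
      have : (d (m + 1) + 1).choose (m + 1) ≤ (c (m + 1)).choose (m + 1) :=
        Nat.choose_le_choose (m + 1) hgt
      have := hc.choose_le hc.2.1 le_rfl
      omega

end IsCascadeRep

lemma succ_le_add_choose (n : ℕ) {k : ℕ} (hk : 1 ≤ k) : n + 1 ≤ (n + k).choose k := by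
  calc n + 1 = (n + 1).choose n := (Nat.choose_succ_self_right n).symm
    _ ≤ (n + k).choose n := Nat.choose_le_choose n (by omega)
    _ = (n + k).choose k := Nat.choose_symm_add

lemma exists_choose_le_lt_choose_succ {k : ℕ} (hk : 1 ≤ k) (r : ℕ) :
    ∃ a, a.choose k ≤ r ∧ r < (a + 1).choose k := by
  classical
  have hex : ∃ a, r < (a + 1).choose k := ⟨r + k, by
    have := succ_le_add_choose (r + 1) hk
    rw [Nat.add_right_comm r 1 k] at this
    omega⟩
  refine ⟨Nat.find hex, ?_, Nat.find_spec hex⟩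
  rcases hfind : Nat.find hex with _ | b
  · simp [Nat.choose_eq_zero_of_lt hk]
  · exact not_lt.1 (Nat.find_min hex (hfind ▸ Nat.lt_succ_self b))

theorem exists_isCascadeRep {k r : ℕ} (hk : 1 ≤ k) (hr : 0 < r) :
    ∃ t c, IsCascadeRep k r t c := by
  induction k generalizing r with
  | zero => omega
  | succ m ih =>
    obtain ⟨a, hle, hlt⟩ := exists_choose_le_lt_choose_succ hk r
    have ha : m + 1 ≤ a := by
      by_contra! ha
      have : (a + 1).choose (m + 1) ≤ (m + 1).choose (m + 1) := Nat.choose_le_choose _ ha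
      rw [Nat.choose_self] at this
      omega
    rcases hle.eq_or_lt with rfl | hlt'
    · exact ⟨m + 1, fun _ => a, le_add_self, le_rfl, fun i _ hi => by omega, ha,
        by rw [Icc_self, sum_singleton]⟩
    · rw [Nat.choose_succ_succ'] at hlt
      have hm : 1 ≤ m := by
        by_contra hm
        obtain rfl : m = 0 := by omega
        rw [Nat.choose_zero_right] at hlt
        omega
      obtain ⟨t, c, hc⟩ := ih hm (show 0 < r - a.choose (m + 1) by omega)
      have hca : c m < a := by
        by_contra! hca
        have := Nat.choose_le_choose m hca
        have := hc.choose_le hc.2.1 le_rfl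
        omega
      refine ⟨t, Function.update c (m + 1) a, ?_⟩
      simpa only [Nat.sub_add_cancel hle] using hc.update_succ hca

lemma cascadeVal_le {g : ℕ → ℕ → ℕ} {k r t : ℕ} {c : ℕ → ℕ} (h : IsCascadeRep k r t c) :
    cascadeVal g k r ≤ ∑ i ∈ Icc t k, g (c i) i :=
  Nat.sInf_le ⟨t, c, h, rfl⟩

lemma exists_isCascadeRep_cascadeVal_eq (g : ℕ → ℕ → ℕ) {k r : ℕ} (hk : 1 ≤ k) (hr : 0 < r) :
    ∃ t c, IsCascadeRep k r t c ∧ cascadeVal g k r = ∑ i ∈ Icc t k, g (c i) i := by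
  obtain ⟨t, c, h⟩ := exists_isCascadeRep hk hr
  exact Nat.sInf_mem (s := {v | ∃ t c, IsCascadeRep k r t c ∧ v = ∑ i ∈ Icc t k, g (c i) i})
    ⟨_, t, c, h, rfl⟩

lemma cascadeVal_eq_zero {g : ℕ → ℕ → ℕ} {k r : ℕ} (h : ¬ ∃ t c, IsCascadeRep k r t c) :
    cascadeVal g k r = 0 := by
  push Not at h
  simp [cascadeVal, h]

theorem statement18_general (k : ℕ) :
    ∀ r s : ℕ, r ≤ s → partialShadow k r ≤ partialShadow k s := by
  intro r s hrs
  by_cases hr : ∃ t c, IsCascadeRep k r t c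
  · obtain ⟨t, c, hc⟩ := hr
    obtain ⟨u, d, hd, hs⟩ := exists_isCascadeRep_cascadeVal_eq (fun m i => m.choose (i - 1))
      hc.one_le (hc.pos.trans_le hrs)
    calc partialShadow k r ≤ ∑ i ∈ Icc t k, (c i).choose (i - 1) := cascadeVal_le hc
      _ ≤ ∑ i ∈ Icc u k, (d i).choose (i - 1) := hc.sum_choose_pred_le_of_le hd hrs
      _ = partialShadow k s := hs.symm
  · exact (cascadeVal_eq_zero hr).trans_le (Nat.zero_le _)

/-- the functions `∂_k` are monotone. -/
theorem statement18 (k : ℕ) (hk : 1 ≤ k) :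
    ∀ r s : ℕ, r ≤ s → partialShadow k r ≤ partialShadow k s :=
  statement18_general k
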